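/- Consider 𝔤_1 (i.e. 𝔤_c with c = 1) and ν > 0. (i) For 0 < μ ≤ 1 let g_{μ,ν} be the inner product with matrix diag(1, μ, ν) in the basis e₀, e₁, e₂; then the symmetry subspace 𝔰 = {v ∈ 𝔤_1 : ∇_u v = [u,v] for all u} equals ℝ·e₀ if μ = 1 and equals {0} if μ < 1. (ii) For 0 < λ < 1 let g'_{λ,ν} be the inner product with matrix [[1, λ, 0], [λ, 1, 0], [0, 0, ν]]; then the corresponding symmetry subspace is {0}. (Consequently the index of symmetry of (G₁, g) is 1 exactly for the metrics g_{1,ν} and 0 otherwise.) -/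
import Mathlib


noncomputable section

open scoped BigOperators

/-- The underlying space of the 3-dimensional Lie algebras under consideration. -/
abbrev V3 : Type := Fin 3 → ℝ

/-- The standard basis `e₀, e₁, e₂`. -/
def e3 (i : Fin 3) : V3 := Pi.single i 1

/-- The bracket of the Lie algebra `𝔤_c`:
`[e₀,e₁] = 0`, `[e₂,e₀] = e₁`, `[e₂,e₁] = −c e₀ + 2 e₁`, extended bilinearly. -/
def braC (c : ℝ) (x y : V3) : V3 :=
  ![-c * (x 2 * y 1 - y 2 * x 1),
    (x 2 * y 0 - y 2 * x 0) + 2 * (x 2 * y 1 - y 2 * x 1),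
    0]

/-- The inner product `g_{μ,ν}` with matrix `diag(1,μ,ν)` in the basis `e₀,e₁,e₂`. -/
def gD (μ ν : ℝ) (x y : V3) : ℝ := x 0 * y 0 + μ * (x 1 * y 1) + ν * (x 2 * y 2)

/-- The inner product `g'_{λ,ν}` with matrix `[[1,λ,0],[λ,1,0],[0,0,ν]]` in the
basis `e₀,e₁,e₂`. -/
def gL (lam ν : ℝ) (x y : V3) : ℝ :=
  x 0 * y 0 + lam * (x 0 * y 1 + x 1 * y 0) + x 1 * y 1 + ν * (x 2 * y 2)

lemma e3_0 : e3 0 = ![1,0,0] := by funext i; fin_cases i <;> simp [e3]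
lemma e3_1 : e3 1 = ![0,1,0] := by funext i; fin_cases i <;> simp [e3]
lemma e3_2 : e3 2 = ![0,0,1] := by funext i; fin_cases i <;> simp [e3]

lemma braC_apply (c : ℝ) (x y : V3) :
    braC c x y 0 = -c * (x 2 * y 1 - y 2 * x 1) ∧
    braC c x y 1 = (x 2 * y 0 - y 2 * x 0) + 2 * (x 2 * y 1 - y 2 * x 1) ∧
    braC c x y 2 = 0 := by
  refine ⟨rfl, rfl, rfl⟩

/-- Nondegeneracy of `gD`. -/
lemma gD_ext (μ ν : ℝ) (hμ : μ ≠ 0) (hν : ν ≠ 0) (a b : V3)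
    (h : ∀ z : V3, gD μ ν a z = gD μ ν b z) : a = b := by
  have h0 := h (e3 0); have h1 := h (e3 1); have h2 := h (e3 2)
  simp [gD, e3_0, e3_1, e3_2] at h0 h1 h2
  funext i
  fin_cases i
  · simpa using h0
  · exact h1.resolve_right hμ
  · exact h2.resolve_right hν

/-- Nondegeneracy of `gL`. -/
lemma gL_ext (lam ν : ℝ) (h0lam : 0 < lam) (hlam : lam < 1) (hν : ν ≠ 0) (a b : V3)
    (h : ∀ z : V3, gL lam ν a z = gL lam ν b z) : a = b := by
  have h0 := h (e3 0); have h1 := h (e3 1); have h2 := h (e3 2)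
  simp [gL, e3_0, e3_1, e3_2] at h0 h1 h2
  have hl2 : (1 : ℝ) - lam ^ 2 ≠ 0 := by nlinarith
  have e0 : (1 - lam ^ 2) * (a 0 - b 0) = 0 := by linear_combination h0 - lam * h1
  have ha0 : a 0 = b 0 := by
    rcases mul_eq_zero.1 e0 with h | h
    · exact absurd h hl2
    · linarith
  have ha1 : a 1 = b 1 := by
    have e1 : (1 - lam ^ 2) * (a 1 - b 1) = 0 := by linear_combination h1 - lam * h0
    rcases mul_eq_zero.1 e1 with h | h
    · exact absurd h hl2
    · linarith
  have ha2 : a 2 = b 2 := h2.resolve_right hν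
  funext i; fin_cases i <;> assumption

/-- on `𝔤_1`, (i) the symmetry subspace
`𝔰 = {v : ∇_u v = [u,v] for all u}` of `g_{μ,ν}` (`0 < μ ≤ 1`) is `ℝ e₀` when
`μ = 1` and `{0}` when `μ < 1`; (ii) the symmetry subspace of `g'_{λ,ν}`
(`0 < λ < 1`) is `{0}`. -/
theorem stmt17 (μ lam ν : ℝ) (hμ0 : 0 < μ) (hμ1 : μ ≤ 1)
    (hlam0 : 0 < lam) (hlam1 : lam < 1) (hν : 0 < ν)
    (nab1 nab2 : V3 → V3 → V3)
    (hK1 : ∀ X Y Z : V3, 2 * gD μ ν (nab1 X Y) Z =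
      gD μ ν (braC 1 X Y) Z - gD μ ν (braC 1 Y Z) X + gD μ ν (braC 1 Z X) Y)
    (hK2 : ∀ X Y Z : V3, 2 * gL lam ν (nab2 X Y) Z =
      gL lam ν (braC 1 X Y) Z - gL lam ν (braC 1 Y Z) X + gL lam ν (braC 1 Z X) Y) :
    (μ = 1 → ∀ v : V3,
      (∀ u : V3, nab1 u v = braC 1 u v) ↔ ∃ t : ℝ, v = t • e3 0) ∧
    (μ < 1 → ∀ v : V3,
      (∀ u : V3, nab1 u v = braC 1 u v) ↔ v = 0) ∧
    (∀ v : V3, (∀ u : V3, nab2 u v = braC 1 u v) ↔ v = 0) := by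
  -- core characterization for the diagonal metric
  have core1 : ∀ v : V3, (∀ u : V3, nab1 u v = braC 1 u v) ↔
      (v 1 = 0 ∧ v 2 = 0 ∧ (1 - μ) * v 0 = 0) := by
    intro v
    constructor
    · intro h
      -- extract three equations from the Koszul formula
      have E : ∀ u z : V3,
          gD μ ν (braC 1 u v) z + gD μ ν (braC 1 v z) u - gD μ ν (braC 1 z u) v = 0 := by
        intro u z
        have hk := hK1 u v z
        rw [h u] at hk
        linarith
      have E1 := E (e3 1) (e3 0)
      have E2 := E (e3 0) (e3 2)
      have E3 := E (e3 1) (e3 2)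
      simp [gD, braC, e3_0, e3_1, e3_2] at E1 E2 E3
      -- E1 : (1+μ) v2 = 0 ; E2 : (1-μ) v1 = 0 ; E3 : (1-μ) v0 - 4 μ v1 = 0 (up to signs)
      have hv2 : v 2 = 0 := by nlinarith
      have hv1sq : μ * v 1 ^ 2 = 0 := by linear_combination (v 0 * E2 - v 1 * E3) / 4
      have hv1 : v 1 = 0 := by
        rcases mul_eq_zero.1 hv1sq with h' | h'
        · exact absurd h' (ne_of_gt hμ0)
        · exact pow_eq_zero_iff (n := 2) (by norm_num) |>.1 h'
      refine ⟨hv1, hv2, ?_⟩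
      linear_combination E3 + 4 * μ * hv1
    · rintro ⟨hv1, hv2, hv0⟩ u
      apply gD_ext μ ν (ne_of_gt hμ0) (ne_of_gt hν)
      intro z
      have hk := hK1 u v z
      simp only [gD, braC, Matrix.cons_val_zero, Matrix.cons_val_one, Matrix.head_cons,
        Matrix.cons_val_two, Matrix.tail_cons] at hk ⊢
      rw [hv1, hv2] at hk ⊢
      linear_combination hk / 2 + ((u 2 * z 1 - u 1 * z 2) / 2) * hv0
  -- core characterization for the off-diagonal metric
  have core2 : ∀ v : V3, (∀ u : V3, nab2 u v = braC 1 u v) ↔ v = 0 := by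
    intro v
    constructor
    · intro h
      have E : ∀ u z : V3,
          gL lam ν (braC 1 u v) z + gL lam ν (braC 1 v z) u - gL lam ν (braC 1 z u) v = 0 := by
        intro u z
        have hk := hK2 u v z
        rw [h u] at hk
        linarith
      have E1 := E (e3 0) (e3 1)
      have E2 := E (e3 0) (e3 2)
      have E3 := E (e3 1) (e3 2)
      simp [gL, braC, e3_0, e3_1, e3_2] at E1 E2 E3
      have hv2 : v 2 = 0 := by nlinarith
      have hsum : v 0 + v 1 = 0 := by
        rcases mul_eq_zero.1 (show lam * (v 0 + v 1) = 0 by nlinarith) with h' | h'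
        · exact absurd h' (ne_of_gt hlam0)
        · exact h'
      have hv1 : v 1 = 0 := by nlinarith [E3, hsum]
      have hv0 : v 0 = 0 := by linarith
      funext i; fin_cases i <;> assumption
    · rintro rfl u
      apply gL_ext lam ν hlam0 hlam1 (ne_of_gt hν)
      intro z
      have hk := hK2 u 0 z
      simp only [gL, braC, Matrix.cons_val_zero, Matrix.cons_val_one, Matrix.head_cons,
        Matrix.cons_val_two, Matrix.tail_cons, Pi.zero_apply] at hk ⊢
      linear_combination hk / 2
  refine ⟨?_, ?_, core2⟩
  · rintro rfl v
    rw [core1 v]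
    constructor
    · rintro ⟨hv1, hv2, -⟩
      refine ⟨v 0, ?_⟩
      funext i; fin_cases i <;> simp [e3_0, hv1, hv2]
    · rintro ⟨t, rfl⟩
      refine ⟨?_, ?_, ?_⟩ <;> simp [e3_0]
  · intro hμlt v
    rw [core1 v]
    constructor
    · rintro ⟨hv1, hv2, hv0⟩
      have : v 0 = 0 := by
        rcases mul_eq_zero.1 hv0 with h' | h'
        · linarith
        · exact h'
      funext i; fin_cases i <;> assumption
    · rintro rfl
      simp
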